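/- Let a, b > 0 and U(z) = tanh((b/a)z). Then ∫_ℝ z²·U(z)·U'(z)·U''(z) dz = −2π²/45; in particular this value is independent of a and b. -/

import Mathlib

open Real MeasureTheory Filter Topology Set

noncomputable section

lemma tanh_hasDerivAt (x : ℝ) : HasDerivAt Real.tanh (1 - Real.tanh x ^ 2) x := by
  have hc := Real.cosh_pos x
  have h : HasDerivAt Real.tanh
      ((Real.cosh x * Real.cosh x - Real.sinh x * Real.sinh x) / Real.cosh x ^ 2) x := by
    have := (Real.hasDerivAt_sinh x).div (Real.hasDerivAt_cosh x) hc.ne'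
    simpa only [Pi.div_def, ← Real.tanh_eq_sinh_div_cosh] using this
  convert h using 1
  rw [Real.tanh_eq_sinh_div_cosh]
  field_simp

lemma one_sub_tanh_sq (x : ℝ) : 1 - Real.tanh x ^ 2 = 1 / Real.cosh x ^ 2 := by
  have hc := Real.cosh_pos x
  rw [Real.tanh_eq_sinh_div_cosh]
  field_simp
  linarith [Real.cosh_sq_sub_sinh_sq x]

lemma tanh_le_one (x : ℝ) : Real.tanh x ≤ 1 := by
  nlinarith [one_sub_tanh_sq x, sq_nonneg (1 / Real.cosh x), Real.cosh_pos x,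
    one_div_pos.2 (pow_pos (Real.cosh_pos x) 2)]

lemma tanh_sq_le_one (x : ℝ) : Real.tanh x ^ 2 ≤ 1 := by
  nlinarith [one_sub_tanh_sq x, one_div_pos.2 (pow_pos (Real.cosh_pos x) 2)]

lemma exp_half_le_cosh (x : ℝ) : Real.exp x / 2 ≤ Real.cosh x := by
  rw [Real.cosh_eq]
  have := Real.exp_pos (-x)
  linarith

lemma sech_sq_le (x : ℝ) : 1 - Real.tanh x ^ 2 ≤ 4 * Real.exp (-(2 * x)) := by
  rw [one_sub_tanh_sq]
  have h1 : Real.exp x / 2 ≤ Real.cosh x := exp_half_le_cosh x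
  have h2 : (0:ℝ) < Real.exp x / 2 := by positivity
  have h3 : (Real.exp x / 2) ^ 2 ≤ Real.cosh x ^ 2 := by nlinarith
  have h4 : (0:ℝ) < (Real.exp x / 2) ^ 2 := by positivity
  calc 1 / Real.cosh x ^ 2 ≤ 1 / ((Real.exp x / 2) ^ 2) := by
        apply one_div_le_one_div_of_le h4 h3
    _ = 4 * Real.exp (-(2 * x)) := by
        rw [div_pow, Real.exp_neg]
        rw [show (2:ℝ) * x = x + x by ring, Real.exp_add]
        field_simp
        ring
lemma one_sub_tanh_eq (x : ℝ) :
    1 - Real.tanh x = 2 * Real.exp (-(2*x)) / (1 + Real.exp (-(2*x))) := by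
  have h1 : Real.cosh x = (Real.exp x + Real.exp (-x)) / 2 := Real.cosh_eq x
  have h2 : Real.sinh x = (Real.exp x - Real.exp (-x)) / 2 := Real.sinh_eq x
  have hc := Real.cosh_pos x
  have he : Real.exp (-(2*x)) = Real.exp (-x) * Real.exp (-x) := by
    rw [← Real.exp_add]; ring_nf
  have he2 : Real.exp x * Real.exp (-x) = 1 := by
    rw [← Real.exp_add]; simp
  have hd : 1 + Real.exp (-(2*x)) > 0 := by positivity
  rw [Real.tanh_eq_sinh_div_cosh, h2, h1]
  rw [he]
  have hex := Real.exp_pos x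
  have henx := Real.exp_pos (-x)
  field_simp
  nlinarith [he2]

lemma one_sub_tanh_le (x : ℝ) : 1 - Real.tanh x ≤ 2 * Real.exp (-(2*x)) := by
  rw [one_sub_tanh_eq]
  have h := Real.exp_pos (-(2*x))
  have hd : 0 < 1 + Real.exp (-(2*x)) := by positivity
  rw [div_le_iff₀ hd]
  nlinarith

lemma tendsto_tanh_atTop : Tendsto Real.tanh atTop (𝓝 1) := by
  have h : Tendsto (fun x : ℝ => 1 - 2 * Real.exp (-(2*x)) / (1 + Real.exp (-(2*x)))) atTop (𝓝 1) := by
    have he : Tendsto (fun x : ℝ => Real.exp (-(2*x))) atTop (𝓝 0) := by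
      have : Tendsto (fun x : ℝ => -(2*x)) atTop atBot := by
        apply tendsto_neg_atBot_iff.mpr
        exact (tendsto_const_mul_atTop_of_pos two_pos).mpr tendsto_id
      exact Real.tendsto_exp_atBot.comp this
    have : Tendsto (fun x : ℝ => 2 * Real.exp (-(2*x)) / (1 + Real.exp (-(2*x)))) atTop (𝓝 0) := by
      have h2 := Tendsto.div ((he.const_mul 2)) (tendsto_const_nhds.add he) (by norm_num : (1:ℝ) + 0 ≠ 0)
      simpa [Pi.div_def] using h2
    simpa using tendsto_const_nhds.sub this
  apply h.congr
  intro x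
  have := one_sub_tanh_eq x
  linarith
-- bounds
lemma le_two_exp_half (x : ℝ) : x ≤ 2 * Real.exp (x/2) := by
  have := Real.add_one_le_exp (x/2)
  nlinarith [Real.exp_pos (x/2)]

lemma sq_le_four_exp {x : ℝ} (hx : 0 ≤ x) : x ^ 2 ≤ 4 * Real.exp x := by
  have h := le_two_exp_half x
  have h2 : x ^ 2 ≤ (2 * Real.exp (x/2))^2 := by
    apply pow_le_pow_left₀ hx h
  calc x ^ 2 ≤ (2 * Real.exp (x/2))^2 := h2
    _ = 4 * Real.exp x := by
        have hh : Real.exp (x/2) ^ 2 = Real.exp x := by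
          rw [sq, ← Real.exp_add, show x/2+x/2 = x by ring]
        rw [mul_pow, hh]; norm_num

lemma sq_mul_exp_le {x : ℝ} (hx : 0 ≤ x) : x ^ 2 * Real.exp (-(2*x)) ≤ 4 * Real.exp (-x) := by
  have h := sq_le_four_exp hx
  have he : Real.exp (-(2*x)) = Real.exp (-x) * Real.exp (-x) := by
    rw [← Real.exp_add]; ring_nf
  calc x ^ 2 * Real.exp (-(2*x)) ≤ (4 * Real.exp x) * Real.exp (-(2*x)) := by
        apply mul_le_mul_of_nonneg_right h (Real.exp_pos _).le
    _ = 4 * Real.exp (-x) := by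
        rw [he, ← Real.exp_add, mul_assoc, ← Real.exp_add]; ring_nf

lemma mul_exp_le {x : ℝ} (hx : 0 ≤ x) : x * Real.exp (-(2*x)) ≤ 2 * Real.exp (-x) := by
  have h : x ≤ 2 * Real.exp x := by
    have := le_two_exp_half x
    have h2 : Real.exp (x/2) ≤ Real.exp x := Real.exp_le_exp.mpr (by linarith)
    linarith
  have he : Real.exp (-(2*x)) = Real.exp (-x) * Real.exp (-x) := by
    rw [← Real.exp_add]; ring_nf
  calc x * Real.exp (-(2*x)) ≤ (2 * Real.exp x) * Real.exp (-(2*x)) := by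
        apply mul_le_mul_of_nonneg_right h (Real.exp_pos _).le
    _ = 2 * (Real.exp x * Real.exp (-x)) * Real.exp (-x) := by rw [he]; ring
    _ = 2 * Real.exp (-x) := by rw [← Real.exp_add]; simp

-- integrability master lemma
lemma integrableOn_of_exp_bound {f : ℝ → ℝ} (hf : Continuous f) {C : ℝ}
    (h : ∀ x ∈ Set.Ioi (0:ℝ), |f x| ≤ C * Real.exp (-x)) :
    IntegrableOn f (Set.Ioi (0:ℝ)) := by
  have hg : IntegrableOn (fun x => C * Real.exp (-x)) (Set.Ioi (0:ℝ)) := by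
    have := (exp_neg_integrableOn_Ioi (0:ℝ) (one_pos)).const_mul C
    simpa [IntegrableOn] using this
  apply Integrable.mono' hg (hf.aestronglyMeasurable.restrict)
  filter_upwards [ae_restrict_mem measurableSet_Ioi] with x hx
  simpa [Real.norm_eq_abs] using h x hx

lemma cont_tanh : Continuous Real.tanh := by
  simp only [funext Real.tanh_eq_sinh_div_cosh]
  exact Real.continuous_sinh.div Real.continuous_cosh (fun x => (Real.cosh_pos x).ne')
lemma tendsto_exp_neg : Tendsto (fun x : ℝ => Real.exp (-x)) atTop (𝓝 0) :=
  Real.tendsto_exp_neg_atTop_nhds_zero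

lemma tendsto_pow_sech (n : ℕ) :
    Tendsto (fun x : ℝ => x ^ n * (1 - Real.tanh x ^ 2)) atTop (𝓝 0) := by
  apply squeeze_zero' (g := fun x => 4 * (x ^ n * Real.exp (-x)))
  · filter_upwards [eventually_ge_atTop (0:ℝ)] with x hx
    have h0 : 0 ≤ 1 - Real.tanh x ^ 2 := by nlinarith [tanh_sq_le_one x]
    positivity
  · filter_upwards [eventually_ge_atTop (0:ℝ)] with x hx
    have h1 := sech_sq_le x
    have h2 : Real.exp (-(2*x)) ≤ Real.exp (-x) := Real.exp_le_exp.mpr (by linarith)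
    have h3 : x ^ n * (1 - Real.tanh x ^ 2) ≤ x ^ n * (4 * Real.exp (-(2*x))) := by
      apply mul_le_mul_of_nonneg_left h1 (by positivity)
    calc x ^ n * (1 - Real.tanh x ^ 2) ≤ x ^ n * (4 * Real.exp (-(2*x))) := h3
      _ ≤ x ^ n * (4 * Real.exp (-x)) := by
          apply mul_le_mul_of_nonneg_left (by linarith) (by positivity)
      _ = 4 * (x ^ n * Real.exp (-x)) := by ring
  · simpa using (tendsto_pow_mul_exp_neg_atTop_nhds_zero n).const_mul 4

lemma tendsto_sq_one_sub_tanh :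
    Tendsto (fun x : ℝ => x ^ 2 * (1 - Real.tanh x)) atTop (𝓝 0) := by
  apply squeeze_zero' (g := fun x => x ^ 2 * (1 - Real.tanh x ^ 2))
  · filter_upwards [eventually_ge_atTop (0:ℝ)] with x hx
    have h0 : 0 ≤ 1 - Real.tanh x := by nlinarith [tanh_le_one x]
    positivity
  · filter_upwards [eventually_ge_atTop (0:ℝ)] with x hx
    have h1 : 0 ≤ Real.tanh x := by
      rw [Real.tanh_eq_sinh_div_cosh]
      apply div_nonneg _ (Real.cosh_pos x).le
      rw [Real.sinh_eq]
      have := Real.exp_le_exp.mpr (by linarith : -x ≤ x)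
      linarith
    have h2 := tanh_le_one x
    nlinarith [mul_nonneg (sq_nonneg x) (mul_nonneg h1 (by linarith : 0 ≤ 1 - Real.tanh x))]
  · exact tendsto_pow_sech 2

lemma integrableOn_x_exp {c : ℝ} (hc : 2 ≤ c) :
    IntegrableOn (fun x : ℝ => x * Real.exp (-(c*x))) (Set.Ioi (0:ℝ)) := by
  apply integrableOn_of_exp_bound (C := 2)
  · exact continuous_id.mul (Real.continuous_exp.comp (continuous_const.mul continuous_id).neg)
  · intro x hx
    have hx0 : (0:ℝ) < x := hx
    have h1 : Real.exp (-(c*x)) ≤ Real.exp (-(2*x)) := by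
      apply Real.exp_le_exp.mpr
      nlinarith
    have h2 : x * Real.exp (-(c*x)) ≤ x * Real.exp (-(2*x)) :=
      mul_le_mul_of_nonneg_left h1 hx0.le
    have h3 := mul_exp_le hx0.le
    rw [abs_of_nonneg (by positivity)]
    linarith

lemma integral_x_exp {c : ℝ} (hc : 2 ≤ c) :
    ∫ x in Set.Ioi (0:ℝ), x * Real.exp (-(c*x)) = 1/c^2 := by
  have hc0 : (0:ℝ) < c := by linarith
  have hderiv : ∀ x ∈ Set.Ici (0:ℝ),
      HasDerivAt (fun x : ℝ => -((x/c + 1/c^2) * Real.exp (-(c*x))))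
        (x * Real.exp (-(c*x))) x := by
    intro x _
    have he : HasDerivAt (fun x : ℝ => Real.exp (-(c*x))) (Real.exp (-(c*x)) * (-c)) x := by
      have harg : HasDerivAt (fun x : ℝ => -(c*x)) (-c) x := by
        simpa [Pi.neg_def] using ((hasDerivAt_id x).const_mul c).neg
      exact harg.exp
    have hl : HasDerivAt (fun x : ℝ => x/c + 1/c^2) (1/c) x := by
      exact ((hasDerivAt_id x).div_const c).add_const (1/c^2)
    have := (hl.mul he).neg
    refine this.congr_deriv ?_
    field_simp
    ring
  have htend : Tendsto (fun x : ℝ => -((x/c + 1/c^2) * Real.exp (-(c*x)))) atTop (𝓝 0) := by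
    have h1 : Tendsto (fun x : ℝ => x * Real.exp (-(c*x))) atTop (𝓝 0) := by
      apply squeeze_zero' (g := fun x => 2 * Real.exp (-x))
      · filter_upwards [eventually_ge_atTop (0:ℝ)] with x hx
        positivity
      · filter_upwards [eventually_ge_atTop (0:ℝ)] with x hx
        have h1 : Real.exp (-(c*x)) ≤ Real.exp (-(2*x)) := Real.exp_le_exp.mpr (by nlinarith)
        have := mul_exp_le hx
        nlinarith [Real.exp_pos (-(c*x)), Real.exp_pos (-(2*x))]
      · simpa using tendsto_exp_neg.const_mul 2
    have h2 : Tendsto (fun x : ℝ => Real.exp (-(c*x))) atTop (𝓝 0) := by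
      apply squeeze_zero' (g := fun x => Real.exp (-x))
      · exact Eventually.of_forall fun x => (Real.exp_pos _).le
      · filter_upwards [eventually_ge_atTop (0:ℝ)] with x hx
        exact Real.exp_le_exp.mpr (by nlinarith)
      · exact tendsto_exp_neg
    have : Tendsto (fun x : ℝ => -((1/c) * (x * Real.exp (-(c*x))) + (1/c^2) * Real.exp (-(c*x))))
        atTop (𝓝 (-((1/c) * 0 + (1/c^2) * 0))) := by
      exact ((h1.const_mul (1/c)).add (h2.const_mul (1/c^2))).neg
    simp only [mul_zero, add_zero, neg_zero] at this
    apply this.congr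
    intro x; ring
  have := integral_Ioi_of_hasDerivAt_of_tendsto' hderiv (integrableOn_x_exp hc) htend
  rw [this]
  simp
lemma hasSum_eta :
    HasSum (fun k : ℕ => 1/(2*(k:ℝ)+1)^2 - 1/(2*(k:ℝ)+2)^2) (π^2/12) := by
  have hz : HasSum (fun n : ℕ => 1/(n:ℝ)^2) (π^2/6) := hasSum_zeta_two
  have he : HasSum (fun k : ℕ => 1/(2*(k:ℝ))^2) (π^2/24) := by
    have h4 := hz.mul_left (1/4)
    have hfe : (fun k : ℕ => (1/4) * (1/(k:ℝ)^2)) = (fun k : ℕ => 1/(2*(k:ℝ))^2) := by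
      funext k
      rw [div_mul_div_comm, mul_pow]
      norm_num
    rw [hfe] at h4
    convert h4 using 1
    rfl
    ring
  have hosum : Summable (fun k : ℕ => 1/(2*(k:ℝ)+1)^2) := by
    have hinj : Function.Injective (fun k : ℕ => 2*k+1) := by
      intro a b h
      simp only [] at h
      omega
    have hcomp := hz.summable.comp_injective hinj
    apply hcomp.congr
    intro k
    simp only [Function.comp]
    push_cast
    ring
  obtain ⟨S, hS⟩ := hosum
  have hfull : HasSum (fun n : ℕ => 1/(n:ℝ)^2) (π^2/24 + S) := by
    apply HasSum.even_add_odd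
    · have hfe : (fun k : ℕ => 1/(((2*k : ℕ)):ℝ)^2) = (fun k : ℕ => 1/(2*(k:ℝ))^2) := by
        funext k; push_cast; ring
      rw [hfe]; exact he
    · have hfe : (fun k : ℕ => 1/(((2*k+1 : ℕ)):ℝ)^2) = (fun k : ℕ => 1/(2*(k:ℝ)+1)^2) := by
        funext k; push_cast; ring
      rw [hfe]; exact hS
  have hSval : S = π^2/8 := by
    have := hfull.unique hz; linarith
  rw [hSval] at hS
  have heshift : HasSum (fun k : ℕ => 1/(2*(k:ℝ)+2)^2) (π^2/24) := by
    have h1 : HasSum (fun k : ℕ => 1/(2*((k:ℝ)+1))^2) (π^2/24) := by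
      have := (hasSum_nat_add_iff (f := fun k : ℕ => 1/(2*(k:ℝ))^2) 1).mpr
        (by simpa using he)
      have hfe : (fun k : ℕ => 1/(2*(((k+1 : ℕ)):ℝ))^2) = (fun k : ℕ => 1/(2*((k:ℝ)+1))^2) := by
        funext k; push_cast; ring
      rwa [hfe] at this
    have hfe : (fun k : ℕ => 1/(2*((k:ℝ)+1))^2) = (fun k : ℕ => 1/(2*(k:ℝ)+2)^2) := by
      funext k; ring_nf
    rwa [hfe] at h1
  have := hS.sub heshift
  convert this using 1
  rfl
  ring
lemma hasSum_term {x : ℝ} (hx : 0 < x) :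
    HasSum (fun k : ℕ => 4*x*(Real.exp (-((4*(k:ℝ)+2)*x)) - Real.exp (-((4*(k:ℝ)+4)*x))))
      (2*x*(1 - Real.tanh x)) := by
  set u := Real.exp (-(2*x)) with hu
  have hu0 : 0 < u := Real.exp_pos _
  have hu1 : u < 1 := by
    rw [hu, Real.exp_lt_one_iff]; linarith
  have hpow : ∀ m : ℕ, u ^ m = Real.exp (-(2*(m:ℝ)*x)) := by
    intro m
    rw [hu, ← Real.exp_nat_mul]
    congr 1
    ring
  have hg : HasSum (fun k : ℕ => (u^2)^k) (1/(1 - u^2)) := by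
    simpa [one_div] using hasSum_geometric_of_lt_one (by positivity) (by nlinarith)
  have h2 := hg.mul_left (4*x*(u - u^2))
  have key : 4*x*(u - u^2) * (1/(1-u^2)) = 2*x*(1 - Real.tanh x) := by
    rw [one_sub_tanh_eq x, ← hu]
    have h1u : 1 - u^2 ≠ 0 := by nlinarith
    have h1u' : 1 + u ≠ 0 := by nlinarith
    field_simp
    ring
  rw [key] at h2
  apply h2.congr_fun
  intro k
  have e1 : 4*x*(u - u^2) * (u^2)^k = 4*x*(u^(2*k+1) - u^(2*k+2)) := by
    rw [← pow_mul]
    ring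
  rw [e1, hpow (2*k+1), hpow (2*k+2)]
  have c1 : -(2*((2*k+1 : ℕ):ℝ)*x) = -((4*(k:ℝ)+2)*x) := by push_cast; ring
  have c2 : -(2*((2*k+2 : ℕ):ℝ)*x) = -((4*(k:ℝ)+4)*x) := by push_cast; ring
  rw [c1, c2]

lemma integral_two_x_one_sub_tanh :
    ∫ x in Set.Ioi (0:ℝ), 2*x*(1 - Real.tanh x) = π^2/12 := by
  set F : ℕ → ℝ → ℝ := fun k x =>
    4*x*(Real.exp (-((4*(k:ℝ)+2)*x)) - Real.exp (-((4*(k:ℝ)+4)*x))) with hF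
  have hc1 : ∀ k : ℕ, (2:ℝ) ≤ 4*(k:ℝ)+2 := by
    intro k; have : (0:ℝ) ≤ (k:ℝ) := Nat.cast_nonneg k; linarith
  have hc2 : ∀ k : ℕ, (2:ℝ) ≤ 4*(k:ℝ)+4 := by
    intro k; have : (0:ℝ) ≤ (k:ℝ) := Nat.cast_nonneg k; linarith
  have hFint : ∀ k : ℕ, IntegrableOn (F k) (Set.Ioi (0:ℝ)) := by
    intro k
    have h1 := (integrableOn_x_exp (hc1 k)).const_mul 4
    have h2 := (integrableOn_x_exp (hc2 k)).const_mul 4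
    have heq : F k = (fun x => 4*(x*Real.exp (-((4*(k:ℝ)+2)*x)))
        - 4*(x*Real.exp (-((4*(k:ℝ)+4)*x)))) := by
      funext x; simp only [hF]; ring
    rw [heq]
    exact h1.sub h2
  have hFval : ∀ k : ℕ, ∫ x in Set.Ioi (0:ℝ), F k x
      = 1/(2*(k:ℝ)+1)^2 - 1/(2*(k:ℝ)+2)^2 := by
    intro k
    have hsplit : ∀ x : ℝ, F k x
        = 4*(x*Real.exp (-((4*(k:ℝ)+2)*x))) - 4*(x*Real.exp (-((4*(k:ℝ)+4)*x))) := by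
      intro x; simp only [hF]; ring
    rw [setIntegral_congr_fun measurableSet_Ioi (fun x _ => hsplit x)]
    rw [integral_sub (((integrableOn_x_exp (hc1 k)).const_mul 4))
      (((integrableOn_x_exp (hc2 k)).const_mul 4))]
    rw [integral_const_mul, integral_const_mul, integral_x_exp (hc1 k), integral_x_exp (hc2 k)]
    have e1 : (4*(k:ℝ)+2) = 2*(2*(k:ℝ)+1) := by ring
    have e2 : (4*(k:ℝ)+4) = 2*(2*(k:ℝ)+2) := by ring
    have p1 : (0:ℝ) < 2*(k:ℝ)+1 := by positivity
    have p2 : (0:ℝ) < 2*(k:ℝ)+2 := by positivity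
    rw [e1, e2]
    field_simp
    ring
  have hFnonneg : ∀ k : ℕ, ∀ x ∈ Set.Ioi (0:ℝ), 0 ≤ F k x := by
    intro k x hx
    have hxx : (0:ℝ) < x := hx
    have : Real.exp (-((4*(k:ℝ)+4)*x)) ≤ Real.exp (-((4*(k:ℝ)+2)*x)) := by
      apply Real.exp_le_exp.mpr
      nlinarith
    simp only [hF]
    nlinarith
  have hnorm : ∀ k : ℕ, ∫ x in Set.Ioi (0:ℝ), ‖F k x‖
      = 1/(2*(k:ℝ)+1)^2 - 1/(2*(k:ℝ)+2)^2 := by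
    intro k
    rw [← hFval k]
    apply setIntegral_congr_fun measurableSet_Ioi
    intro x hx
    show ‖F k x‖ = F k x
    rw [Real.norm_eq_abs, abs_of_nonneg (hFnonneg k x hx)]
  have hsummable : Summable (fun k : ℕ => ∫ x in Set.Ioi (0:ℝ), ‖F k x‖) := by
    rw [funext hnorm]
    exact hasSum_eta.summable
  have hsum := hasSum_integral_of_summable_integral_norm
    (μ := volume.restrict (Set.Ioi (0:ℝ))) (F := F) hFint hsummable
  have hsum2 : HasSum (fun k : ℕ => 1/(2*(k:ℝ)+1)^2 - 1/(2*(k:ℝ)+2)^2)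
      (∫ x in Set.Ioi (0:ℝ), ∑' k, F k x) := by
    rwa [funext hFval] at hsum
  have hval := hsum2.unique hasSum_eta
  rw [← hval]
  apply setIntegral_congr_fun measurableSet_Ioi
  intro x hx
  exact ((hasSum_term hx).tsum_eq).symm
-- integrability of the pieces
lemma integrableOn_I2 :
    IntegrableOn (fun x : ℝ => x^2*(1 - Real.tanh x^2)) (Set.Ioi (0:ℝ)) := by
  apply integrableOn_of_exp_bound (C := 16)
  · have : Continuous fun x : ℝ => 1 - Real.tanh x ^ 2 :=
      continuous_const.sub (cont_tanh.pow 2)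
    exact (continuous_pow 2).mul this
  · intro x hx
    have hx0 : (0:ℝ) < x := hx
    have h1 := sech_sq_le x
    have h2 := sq_mul_exp_le hx0.le
    have h3 : (0:ℝ) ≤ 1 - Real.tanh x ^2 := by nlinarith [tanh_sq_le_one x]
    rw [abs_of_nonneg (by positivity)]
    nlinarith [sq_nonneg x, Real.exp_pos (-x)]

lemma integrableOn_I1 :
    IntegrableOn (fun x : ℝ => x^2*Real.tanh x^2*(1 - Real.tanh x^2)^2) (Set.Ioi (0:ℝ)) := by
  apply integrableOn_of_exp_bound (C := 16)
  · have hc : Continuous fun x : ℝ => 1 - Real.tanh x ^ 2 :=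
      continuous_const.sub (cont_tanh.pow 2)
    exact ((continuous_pow 2).mul (cont_tanh.pow 2)).mul (hc.pow 2)
  · intro x hx
    have hx0 : (0:ℝ) < x := hx
    have h1 := sech_sq_le x
    have h2 := sq_mul_exp_le hx0.le
    have h3 : (0:ℝ) ≤ 1 - Real.tanh x ^2 := by nlinarith [tanh_sq_le_one x]
    have h4 := tanh_sq_le_one x
    have h5 : (0:ℝ) ≤ Real.tanh x ^ 2 := sq_nonneg _
    have h6 : (1 - Real.tanh x^2)^2 ≤ 1 - Real.tanh x^2 := by nlinarith
    rw [abs_of_nonneg (by positivity)]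
    have hb : x^2*Real.tanh x^2*(1 - Real.tanh x^2)^2 ≤ x^2*(1 - Real.tanh x^2) := by
      nlinarith [sq_nonneg x, mul_nonneg (sq_nonneg x) h3]
    nlinarith [sq_nonneg x, Real.exp_pos (-x)]

lemma integrableOn_I3 :
    IntegrableOn (fun x : ℝ => 2*x*(1 - Real.tanh x)) (Set.Ioi (0:ℝ)) := by
  apply integrableOn_of_exp_bound (C := 8)
  · exact (continuous_const.mul continuous_id).mul (continuous_const.sub cont_tanh)
  · intro x hx
    have hx0 : (0:ℝ) < x := hx
    have h1 := one_sub_tanh_le x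
    have h2 := mul_exp_le hx0.le
    have h3 : (0:ℝ) ≤ 1 - Real.tanh x := by nlinarith [tanh_le_one x]
    rw [abs_of_nonneg (by positivity)]
    nlinarith [Real.exp_pos (-x), Real.exp_pos (-(2*x))]

-- ∫_{0}^{∞} x^2 sech^2 = π²/12
lemma int_xsq_sech : ∫ x in Set.Ioi (0:ℝ), x^2*(1 - Real.tanh x^2) = π^2/12 := by
  have hderiv : ∀ x ∈ Set.Ici (0:ℝ),
      HasDerivAt (fun x : ℝ => x^2*(Real.tanh x - 1))
        (2*x*(Real.tanh x - 1) + x^2*(1 - Real.tanh x^2)) x := by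
    intro x _
    have h := (hasDerivAt_pow 2 x).mul ((tanh_hasDerivAt x).sub_const 1)
    refine h.congr_deriv ?_
    ring
  have htend : Tendsto (fun x : ℝ => x^2*(Real.tanh x - 1)) atTop (𝓝 0) := by
    have := tendsto_sq_one_sub_tanh.neg
    simp only [neg_zero] at this
    apply this.congr
    intro x; ring
  have hint3' : IntegrableOn (fun x : ℝ => 2*x*(Real.tanh x - 1)) (Set.Ioi (0:ℝ)) := by
    have heq : (fun x : ℝ => 2*x*(Real.tanh x - 1))
        = (fun x : ℝ => -(2*x*(1 - Real.tanh x))) := by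
      funext x; ring
    rw [heq]
    exact integrableOn_I3.neg
  have hintsum : IntegrableOn
      (fun x : ℝ => 2*x*(Real.tanh x - 1) + x^2*(1 - Real.tanh x^2)) (Set.Ioi (0:ℝ)) :=
    hint3'.add integrableOn_I2
  have hFTC := integral_Ioi_of_hasDerivAt_of_tendsto' hderiv hintsum htend
  simp only [Real.tanh_zero] at hFTC
  norm_num at hFTC
  -- hFTC : ∫ (2x(tanh−1) + x²(1−tanh²)) = 0
  rw [integral_add hint3' integrableOn_I2] at hFTC
  have hneg : ∫ x in Set.Ioi (0:ℝ), 2*x*(Real.tanh x - 1)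
      = -∫ x in Set.Ioi (0:ℝ), 2*x*(1 - Real.tanh x) := by
    rw [← integral_neg]
    apply setIntegral_congr_fun measurableSet_Ioi
    intro x _
    ring
  rw [hneg, integral_two_x_one_sub_tanh] at hFTC
  linarith
-- the main antiderivative
lemma int_main_Ioi :
    ∫ x in Set.Ioi (0:ℝ), x^2*Real.tanh x^2*(1 - Real.tanh x^2)^2 = π^2/90 := by
  set F : ℝ → ℝ := fun x =>
    x^2 * (Real.tanh x^3/3 - Real.tanh x^5/5 - 2*Real.tanh x/15)
      - 2*x*((1-Real.tanh x^2)*(1-3*Real.tanh x^2)/60)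
      + 2*((Real.tanh x - Real.tanh x^3)/60) with hF
  have hderiv : ∀ x ∈ Set.Ici (0:ℝ), HasDerivAt F
      (x^2*Real.tanh x^2*(1 - Real.tanh x^2)^2 - (2/15)*(x^2*(1 - Real.tanh x^2))) x := by
    intro x _
    have ht := tanh_hasDerivAt x
    have h1 := (((ht.pow 3).div_const 3).sub ((ht.pow 5).div_const 5)).sub
      ((ht.const_mul 2).div_const 15)
    have hA := (hasDerivAt_pow 2 x).mul h1
    have hu : HasDerivAt (fun x : ℝ => 1 - Real.tanh x^2)
        (-(2 * Real.tanh x ^ 1 * (1 - Real.tanh x^2))) x := (ht.pow 2).const_sub 1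
    have hv : HasDerivAt (fun x : ℝ => 1 - 3*Real.tanh x^2)
        (-(3 * (2 * Real.tanh x ^ 1 * (1 - Real.tanh x^2)))) x :=
      ((ht.pow 2).const_mul 3).const_sub 1
    have hB := (((hasDerivAt_id x).const_mul 2).mul ((hu.mul hv).div_const 60))
    have hC := ((ht.sub (ht.pow 3)).div_const 60).const_mul 2
    have h := (hA.sub hB).add hC
    refine h.congr_deriv ?_
    simp only [id, Pi.mul_apply, Pi.sub_apply, Pi.pow_apply]
    ring
  have hF0 : F 0 = 0 := by
    simp [hF, Real.tanh_zero]
  have htend : Tendsto F atTop (𝓝 0) := by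
    have htanh := tendsto_tanh_atTop
    have h1 : Tendsto (fun x : ℝ => (x^2*(1-Real.tanh x^2))
        * (Real.tanh x*(3*Real.tanh x^2-2)/15)) atTop (𝓝 (0 * (1*(3*1^2-2)/15))) := by
      apply (tendsto_pow_sech 2).mul
      exact ((htanh.mul (((htanh.pow 2).const_mul 3).sub_const 2)).div_const 15)
    have h2 : Tendsto (fun x : ℝ => (x^1*(1-Real.tanh x^2))
        * ((1-3*Real.tanh x^2)/30)) atTop (𝓝 (0 * ((1-3*1^2)/30))) := by
      apply (tendsto_pow_sech 1).mul
      exact (((htanh.pow 2).const_mul 3).const_sub 1).div_const 30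
    have h3 : Tendsto (fun x : ℝ => (Real.tanh x - Real.tanh x^3)/30) atTop
        (𝓝 ((1 - 1^3)/30)) := (htanh.sub (htanh.pow 3)).div_const 30
    have h := (h1.sub h2).add h3
    norm_num at h
    apply h.congr
    intro x
    simp only [hF]
    ring
  have hint : IntegrableOn
      (fun x : ℝ => x^2*Real.tanh x^2*(1 - Real.tanh x^2)^2
        - (2/15)*(x^2*(1 - Real.tanh x^2))) (Set.Ioi (0:ℝ)) :=
    integrableOn_I1.sub (integrableOn_I2.const_mul (2/15))
  have hFTC := integral_Ioi_of_hasDerivAt_of_tendsto' hderiv hint htend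
  rw [hF0] at hFTC
  norm_num at hFTC
  rw [integral_sub integrableOn_I1 (integrableOn_I2.const_mul (2/15))] at hFTC
  rw [integral_const_mul, int_xsq_sech] at hFTC
  have : (2:ℝ)/15 * (π^2/12) = π^2/90 := by ring
  linarith

lemma core_real :
    ∫ x : ℝ, x^2*Real.tanh x^2*(1 - Real.tanh x^2)^2 = π^2/45 := by
  have heven : ∀ x : ℝ, |x|^2*Real.tanh |x|^2*(1 - Real.tanh |x|^2)^2
      = x^2*Real.tanh x^2*(1 - Real.tanh x^2)^2 := by
    intro x
    rcases abs_choice x with h | h <;> rw [h] <;> simp [Real.tanh_neg]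
  have h := integral_comp_abs
    (f := fun x : ℝ => x^2*Real.tanh x^2*(1 - Real.tanh x^2)^2)
  rw [int_main_Ioi] at h
  rw [← funext heven] at *
  rw [h]
  ring
end

/-- For `a, b > 0` and `U(z) = tanh((b/a)z)`,
`∫ z² U U' U'' dz = −2π²/45`, independently of `a` and `b`. -/
theorem stmt_13 (a b : ℝ) (ha : 0 < a) (hb : 0 < b)
    (U : ℝ → ℝ) (hU : U = fun z => Real.tanh ((b / a) * z)) :
    ∫ z : ℝ, z ^ 2 * U z * deriv U z * deriv (deriv U) z = -(2 * π ^ 2) / 45 := by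
  set c := b/a with hc
  have hc0 : 0 < c := div_pos hb ha
  have harg : ∀ z : ℝ, HasDerivAt (fun z : ℝ => c*z) c z := by
    intro z; simpa using (hasDerivAt_id z).const_mul c
  have hU1 : deriv U = fun z => c * (1 - Real.tanh (c*z)^2) := by
    funext z
    have h : HasDerivAt U ((1 - Real.tanh (c*z)^2) * c) z := by
      rw [hU]
      exact (tanh_hasDerivAt (c*z)).comp z (harg z)
    rw [h.deriv]; ring
  have hU2 : deriv (deriv U) = fun z => -2*c^2*(Real.tanh (c*z)*(1 - Real.tanh (c*z)^2)) := by
    funext z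
    rw [hU1]
    have ht : HasDerivAt (fun z : ℝ => Real.tanh (c*z)) ((1 - Real.tanh (c*z)^2) * c) z :=
      (tanh_hasDerivAt (c*z)).comp z (harg z)
    have h : HasDerivAt (fun z : ℝ => c * (1 - Real.tanh (c*z)^2))
        (c * (-(2 * Real.tanh (c*z) ^ 1 * ((1 - Real.tanh (c*z)^2) * c)))) z :=
      ((ht.pow 2).const_sub 1).const_mul c
    rw [h.deriv]; ring
  have hintegrand : (fun z : ℝ => z^2 * U z * deriv U z * deriv (deriv U) z)
      = fun z => (-2*c) * ((c*z)^2*Real.tanh (c*z)^2*(1 - Real.tanh (c*z)^2)^2) := by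
    funext z
    rw [hU2, hU1, hU]
    ring
  show (∫ z : ℝ, z ^ 2 * U z * deriv U z * deriv (deriv U) z) = -(2 * π ^ 2) / 45
  rw [hintegrand, MeasureTheory.integral_const_mul]
  have hcomp := MeasureTheory.Measure.integral_comp_mul_left
    (g := fun y : ℝ => y^2*Real.tanh y^2*(1 - Real.tanh y^2)^2) c
  rw [hcomp, core_real]
  rw [abs_of_pos (inv_pos.mpr hc0)]
  rw [smul_eq_mul]
  field_simp
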